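/- Let S be a compact right reversible semitopological semigroup acting separately weakly continuously and asymptotically nonexpansively on a subset K of a Banach space. Then the action is super asymptotically nonexpansive. -/

import Mathlib

/-- A (nonempty) left ideal of a semigroup `S`: `I ≠ ∅` and `S * I ⊆ I`. -/
def IsLeftIdeal {S : Type*} [Semigroup S] (I : Set S) : Prop :=
  I.Nonempty ∧ ∀ s : S, ∀ i ∈ I, s * i ∈ I

/-- `S` is right reversible: any two closed left ideals of `S` intersect. -/
def RightReversible (S : Type*) [Semigroup S] [TopologicalSpace S] : Prop :=
  ∀ I J : Set S, IsLeftIdeal I → IsLeftIdeal J → IsClosed I → IsClosed J → (I ∩ J).Nonempty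

/-- Asymptotically nonexpansive action. -/
def AsympNonexpansive {S E : Type*} [Semigroup S] [NormedAddCommGroup E]
    (act : S → E → E) (K : Set E) : Prop :=
  ∀ x ∈ K, ∀ y ∈ K, ∃ I : Set S, IsLeftIdeal I ∧ ∀ s ∈ I, ‖act s x - act s y‖ ≤ ‖x - y‖

/-- Super asymptotically nonexpansive action. -/
def SuperAsympNonexpansive {S E : Type*} [Semigroup S] [NormedAddCommGroup E]
    (act : S → E → E) (K : Set E) : Prop :=
  ∀ x ∈ K, ∀ t : S, ∃ I : Set S, IsLeftIdeal I ∧ I ⊆ Set.range (· * t) ∧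
    ∀ s ∈ I, ∀ y ∈ K, ‖act s x - act s y‖ ≤ ‖x - y‖

/-! The intersection `M` of all closed left ideals of `S` is again a left ideal: its members are
nonempty compact sets, and right reversibility makes the family directed, so `M` is nonempty by
Cantor's intersection theorem. Being below every closed left ideal, `M` lies in `St` and in the
closure of every left ideal. For fixed `x, y` the set of `s` with `‖s.x - s.y‖ ≤ ‖x - y‖` is closed,
since norm balls are weakly closed, so it contains the closure of the left ideal given by asymptotic
nonexpansiveness, hence `M`. Thus `M` serves for all `y` at once.
-/

open Set

section WeakTopology

variable {𝕜 E : Type*} [RCLike 𝕜] [AddCommGroup E] [Module 𝕜 E] [Module ℝ E]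
  [IsScalarTower ℝ 𝕜 E] [TopologicalSpace E] [IsTopologicalAddGroup E] [ContinuousSMul 𝕜 E]
  [LocallyConvexSpace ℝ E]

theorem IsClosed.toWeakSpace_image_of_convex {s : Set E} (hs : IsClosed s) (hconv : Convex ℝ s) :
    IsClosed (toWeakSpace 𝕜 E '' s) := by
  rw [← closure_eq_iff_isClosed, ← hconv.toWeakSpace_closure 𝕜, hs.closure_eq]

end WeakTopology

theorem isClosed_setOf_norm_sub_le_of_weak {X E : Type*} [TopologicalSpace X]
    [NormedAddCommGroup E] [NormedSpace ℝ E] {f g : X → E}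
    (hf : Continuous fun u => toWeakSpace ℝ E (f u))
    (hg : Continuous fun u => toWeakSpace ℝ E (g u))
    (c : ℝ) : IsClosed {u | ‖f u - g u‖ ≤ c} := by
  have hball := (Metric.isClosed_closedBall (x := (0 : E)) (ε := c)).toWeakSpace_image_of_convex
    (𝕜 := ℝ) (convex_closedBall 0 c)
  convert hball.preimage (hf.sub hg) using 1
  ext u
  simp [← map_sub]

section LeftIdeals

variable {S : Type*} [Semigroup S]

theorem isLeftIdeal_range_mul_right (t : S) : IsLeftIdeal (range (· * t)) := by
  refine ⟨⟨t * t, t, rfl⟩, ?_⟩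
  rintro s - ⟨u, rfl⟩
  exact ⟨s * u, mul_assoc s u t⟩

variable [TopologicalSpace S]

theorem IsLeftIdeal.closure (hmulL : ∀ t : S, Continuous fun s => t * s) {I : Set S}
    (hI : IsLeftIdeal I) : IsLeftIdeal (closure I) :=
  ⟨hI.1.closure, fun s _ hi => MapsTo.closure (fun _ => hI.2 s _) (hmulL s) hi⟩

theorem RightReversible.isLeftIdeal_inter (hrev : RightReversible S) {I J : Set S}
    (hI : IsLeftIdeal I) (hJ : IsLeftIdeal J) (hIc : IsClosed I) (hJc : IsClosed J) :
    IsLeftIdeal (I ∩ J) :=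
  ⟨hrev I J hI hJ hIc hJc, fun s _ hi => ⟨hI.2 s _ hi.1, hJ.2 s _ hi.2⟩⟩

variable (S) in
def closedLeftIdeals : Set (Set S) :=
  {I | IsLeftIdeal I ∧ IsClosed I}

theorem RightReversible.directedOn_closedLeftIdeals (hrev : RightReversible S) :
    DirectedOn (· ⊇ ·) (closedLeftIdeals S) :=
  fun I ⟨hI, hIc⟩ J ⟨hJ, hJc⟩ =>
    ⟨I ∩ J, ⟨hrev.isLeftIdeal_inter hI hJ hIc hJc, hIc.inter hJc⟩, inter_subset_left,
      inter_subset_right⟩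

theorem RightReversible.isLeftIdeal_sInter_closedLeftIdeals [CompactSpace S] [Nonempty S]
    (hrev : RightReversible S) : IsLeftIdeal (⋂₀ closedLeftIdeals S) := by
  have hmem_univ : univ ∈ closedLeftIdeals S :=
    ⟨⟨univ_nonempty, fun _ _ _ => trivial⟩, isClosed_univ⟩
  have : Nonempty (closedLeftIdeals S) := ⟨⟨univ, hmem_univ⟩⟩
  refine ⟨?_, fun s i hi J hJ => hJ.1.2 s i (hi J hJ)⟩
  exact IsCompact.nonempty_sInter_of_directed_nonempty_isCompact_isClosed
    hrev.directedOn_closedLeftIdeals (fun I hI => hI.1.1) (fun I hI => hI.2.isCompact)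
    (fun I hI => hI.2)

theorem sInter_closedLeftIdeals_subset (hmulL : ∀ t : S, Continuous fun s => t * s)
    {I C : Set S} (hI : IsLeftIdeal I) (hIC : I ⊆ C) (hC : IsClosed C) :
    ⋂₀ closedLeftIdeals S ⊆ C := by
  have hmem : closure I ∈ closedLeftIdeals S := ⟨hI.closure hmulL, isClosed_closure⟩
  exact (sInter_subset_of_mem hmem).trans (closure_minimal hIC hC)

end LeftIdeals

theorem asymp_implies_superAsymp_of_compact_general
    {S E : Type*} [Semigroup S] [TopologicalSpace S] [T2Space S] [CompactSpace S]
    [NormedAddCommGroup E] [NormedSpace ℝ E]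
    -- `S` is a semitopological semigroup: multiplication is separately continuous
    (hmulL : ∀ t : S, Continuous fun s => t * s)
    (hmulR : ∀ t : S, Continuous fun s => s * t)
    (hrev : RightReversible S)
    (K : Set E)
    (act : S → E → E)
    -- the action is separately weakly continuous
    (hcontS : ∀ x ∈ K, Continuous fun s : S => toWeakSpace ℝ E (act s x))
    (han : AsympNonexpansive act K) :
    SuperAsympNonexpansive act K := by
  intro x hx t
  have : Nonempty S := ⟨t⟩
  have hSt : range (· * t) ∈ closedLeftIdeals S :=
    ⟨isLeftIdeal_range_mul_right t, (isCompact_range (hmulR t)).isClosed⟩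
  refine ⟨⋂₀ closedLeftIdeals S, hrev.isLeftIdeal_sInter_closedLeftIdeals,
    sInter_subset_of_mem hSt, fun s hs y hy => ?_⟩
  obtain ⟨I, hI, hIest⟩ := han x hx y hy
  exact sInter_closedLeftIdeals_subset hmulL hI hIest
    (isClosed_setOf_norm_sub_le_of_weak (hcontS x hx) (hcontS y hy) _) hs

/-- a separately weakly continuous, asymptotically nonexpansive action of a
compact right reversible semitopological semigroup on a subset of a Banach space is super
asymptotically nonexpansive. -/
theorem asymp_implies_superAsymp_of_compact
    {S E : Type*} [Semigroup S] [TopologicalSpace S] [T2Space S] [CompactSpace S]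
    [NormedAddCommGroup E] [NormedSpace ℝ E] [CompleteSpace E]
    -- `S` is a semitopological semigroup: multiplication is separately continuous
    (hmulL : ∀ t : S, Continuous fun s => t * s)
    (hmulR : ∀ t : S, Continuous fun s => s * t)
    (hrev : RightReversible S)
    (K : Set E)
    (act : S → E → E) (hmaps : ∀ s : S, Set.MapsTo (act s) K K)
    (haction : ∀ s t : S, ∀ x ∈ K, act (s * t) x = act s (act t x))
    -- the action is separately weakly continuous
    (hcontS : ∀ x ∈ K, Continuous fun s : S => toWeakSpace ℝ E (act s x))
    (hcontK : ∀ s : S, ContinuousOn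
      (fun x : WeakSpace ℝ E => toWeakSpace ℝ E (act s ((toWeakSpace ℝ E).symm x)))
      (toWeakSpace ℝ E '' K))
    (han : AsympNonexpansive act K) :
    SuperAsympNonexpansive act K :=
  asymp_implies_superAsymp_of_compact_general hmulL hmulR hrev K act hcontS han
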